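/- For a constant 1-form a = Σ aᵢ dxᵢ on T³ and null-homotopic gauge transformations g = exp(2πX), g' = exp(2πY) with X, Y : T³ → iℝ smooth, the expression C(a; g, g') = exp(2πi ∫_{T³} a ∧ dX ∧ dY) satisfies the group 2-cocycle condition for the action of gauge transformations on potentials a ↦ a + g⁻¹dg, given that the action of null-homotopic transformations leaves constant a unchanged modulo exact forms. -/

import Mathlib

/- STATEMENT 9: For a constant 1-form `a = Σ aᵢ dxᵢ` on `T³` and null-homotopic
gauge transformations `g = exp(2πX)`, `g' = exp(2πY)` with `X, Y : T³ → iℝ`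
smooth (represented here by smooth ℤ³-periodic real functions on ℝ³), the
expression `C(a; g, g') = exp(2πi ∫_{T³} a ∧ dX ∧ dY)` satisfies the group
2-cocycle condition.  Since the action `a ↦ a + g⁻¹dg` of a null-homotopic
transformation changes `a` only by the exact form `dX`, the constant potential
`a` is unchanged, and the cocycle condition reads
`C(a; X, Y) C(a; X+Y, Z) = C(a; Y, Z) C(a; X, Y+Z)`. -/

abbrev R3 := Fin 3 → ℝ

/-- `∫_{T³} a ∧ dX ∧ dY` for a constant 1-form `a`:
`∫_{[0,1]³} Σ_σ sgn(σ) a_{σ(0)} ∂_{σ(1)}X ∂_{σ(2)}Y`. -/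
noncomputable def wedgeInt (a : Fin 3 → ℝ) (X Y : R3 → ℝ) : ℝ :=
  ∫ x in Set.Icc (0 : R3) 1,
    ∑ σ : Equiv.Perm (Fin 3), ((Equiv.Perm.sign σ : ℤ) : ℝ) *
      a (σ 0) * fderiv ℝ X x (Pi.single (σ 1) 1) * fderiv ℝ Y x (Pi.single (σ 2) 1)

/-- `C(a; g, g') = exp(2πi ∫ a ∧ dX ∧ dY)` for `g = exp(2πX)`, `g' = exp(2πY)`. -/
noncomputable def Cg (a : Fin 3 → ℝ) (X Y : R3 → ℝ) : ℂ :=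
  Complex.exp (2 * Real.pi * Complex.I * wedgeInt a X Y)


private lemma integrand_cont (a : Fin 3 → ℝ) {X Y : R3 → ℝ}
    (hX : ContDiff ℝ (⊤ : ℕ∞) X) (hY : ContDiff ℝ (⊤ : ℕ∞) Y) :
    Continuous fun x : R3 => ∑ σ : Equiv.Perm (Fin 3), ((Equiv.Perm.sign σ : ℤ) : ℝ) *
      a (σ 0) * fderiv ℝ X x (Pi.single (σ 1) 1) * fderiv ℝ Y x (Pi.single (σ 2) 1) := by
  apply continuous_finset_sum
  intro σ _
  exact ((continuous_const.mul
    ((hX.continuous_fderiv (by simp)).clm_apply continuous_const)).mul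
    ((hY.continuous_fderiv (by simp)).clm_apply continuous_const))

private lemma integrand_int (a : Fin 3 → ℝ) {X Y : R3 → ℝ}
    (hX : ContDiff ℝ (⊤ : ℕ∞) X) (hY : ContDiff ℝ (⊤ : ℕ∞) Y) :
    MeasureTheory.IntegrableOn (fun x : R3 => ∑ σ : Equiv.Perm (Fin 3),
      ((Equiv.Perm.sign σ : ℤ) : ℝ) *
      a (σ 0) * fderiv ℝ X x (Pi.single (σ 1) 1) * fderiv ℝ Y x (Pi.single (σ 2) 1))
      (Set.Icc 0 1) :=
  ((integrand_cont a hX hY).continuousOn).integrableOn_compact isCompact_Icc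

private lemma wedge_add_left (a : Fin 3 → ℝ) {X Y Z : R3 → ℝ}
    (hX : ContDiff ℝ (⊤ : ℕ∞) X) (hY : ContDiff ℝ (⊤ : ℕ∞) Y) (hZ : ContDiff ℝ (⊤ : ℕ∞) Z) :
    wedgeInt a (X + Y) Z = wedgeInt a X Z + wedgeInt a Y Z := by
  unfold wedgeInt
  rw [← MeasureTheory.integral_add (integrand_int a hX hZ) (integrand_int a hY hZ)]
  apply MeasureTheory.setIntegral_congr_fun measurableSet_Icc
  intro x _
  simp only [← Finset.sum_add_distrib]
  apply Finset.sum_congr rfl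
  intro σ _
  have : fderiv ℝ (X + Y) x = fderiv ℝ X x + fderiv ℝ Y x :=
    fderiv_add (hX.differentiable (by simp) x) (hY.differentiable (by simp) x)
  simp [this]
  ring

private lemma wedge_add_right (a : Fin 3 → ℝ) {X Y Z : R3 → ℝ}
    (hX : ContDiff ℝ (⊤ : ℕ∞) X) (hY : ContDiff ℝ (⊤ : ℕ∞) Y) (hZ : ContDiff ℝ (⊤ : ℕ∞) Z) :
    wedgeInt a X (Y + Z) = wedgeInt a X Y + wedgeInt a X Z := by
  unfold wedgeInt
  rw [← MeasureTheory.integral_add (integrand_int a hX hY) (integrand_int a hX hZ)]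
  apply MeasureTheory.setIntegral_congr_fun measurableSet_Icc
  intro x _
  simp only [← Finset.sum_add_distrib]
  apply Finset.sum_congr rfl
  intro σ _
  have : fderiv ℝ (Y + Z) x = fderiv ℝ Y x + fderiv ℝ Z x :=
    fderiv_add (hY.differentiable (by simp) x) (hZ.differentiable (by simp) x)
  simp [this]
  ring

theorem stmt9 (a : Fin 3 → ℝ) (X Y Z : R3 → ℝ)
    (hX : ContDiff ℝ (⊤ : ℕ∞) X) (hY : ContDiff ℝ (⊤ : ℕ∞) Y) (hZ : ContDiff ℝ (⊤ : ℕ∞) Z)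
    (hXper : ∀ (x : R3) (n : Fin 3 → ℤ), X (fun i => x i + (n i : ℝ)) = X x)
    (hYper : ∀ (x : R3) (n : Fin 3 → ℤ), Y (fun i => x i + (n i : ℝ)) = Y x)
    (hZper : ∀ (x : R3) (n : Fin 3 → ℤ), Z (fun i => x i + (n i : ℝ)) = Z x) :
    Cg a X Y * Cg a (X + Y) Z = Cg a Y Z * Cg a X (Y + Z) := by
  unfold Cg
  rw [← Complex.exp_add, ← Complex.exp_add,
    wedge_add_left a hX hY hZ, wedge_add_right a hX hY hZ]
  push_cast
  ring_nf
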